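/- In the unconstrained case (X = ℝⁿ), under Assumption 1 the γ-damped prediction x_{k+1|k} = x_k − ∇²ₓₓf(x_k;t_k)⁻¹ (h∇_{tx}f(x_k;t_k) + γ∇ₓf(x_k;t_k)) with γ ∈ [0,1] satisfies ‖x_{k+1|k} − x*(t_{k+1})‖ ≤ (1 − γ + γ·2L/m)‖x_k − x*(t_k)‖ + 2Δ₁, where Δ₁ = 2h(C₀/m)(1 + L/m). -/

import Mathlib

abbrev Eucl (n : ℕ) := EuclideanSpace ℝ (Fin n)

/-!
With `d = x_k - x*(t_k)` and `H` the Hessian at `x_k`, the prediction error is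
`d - γ H⁻¹∇ₓf(x_k; t_k) - h H⁻¹∇ₜₓf(x_k; t_k) + (x*(t_k) - x*(t_{k+1}))`. Coercivity `m I ⪯ H`
gives `‖H⁻¹‖ ≤ 1/m`; as `∇ₓf(x*(t_k); t_k) = 0`, the Newton term is at most `(L/m)‖d‖` and the
tangent term at most `h C₀/m`, while strong monotonicity of `∇ₓf(·; t_k)` bounds the drift
`‖x*(t_k) - x*(t_{k+1})‖` of the minimizer by `h C₀/m`. The stated bound is weaker, as `m ≤ L`.
-/

open scoped RealInnerProductSpace

section StrongMonotonicity

variable {E : Type*} [NormedAddCommGroup E] [InnerProductSpace ℝ E]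

theorem mul_norm_le_norm_of_mul_sq_le_inner {m : ℝ} {v w : E} (h : m * ‖v‖ ^ 2 ≤ ⟪v, w⟫) :
    m * ‖v‖ ≤ ‖w‖ := by
  rcases (norm_nonneg v).eq_or_lt with hv | hv
  · rw [← hv, mul_zero]
    exact norm_nonneg w
  · have hcs : ⟪v, w⟫ ≤ ‖v‖ * ‖w‖ := real_inner_le_norm v w
    nlinarith

theorem ContinuousLinearEquiv.norm_symm_apply_le_of_coercive {m : ℝ} (hm : 0 < m)
    (A : E ≃L[ℝ] E) (hA : ∀ v, m * ‖v‖ ^ 2 ≤ ⟪v, A v⟫) (w : E) :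
    ‖A.symm w‖ ≤ ‖w‖ / m := by
  have h := mul_norm_le_norm_of_mul_sq_le_inner (hA (A.symm w))
  rw [A.apply_symm_apply] at h
  rwa [le_div_iff₀' hm]

theorem norm_sub_le_div_of_strongly_monotone {m : ℝ} (hm : 0 < m) {F G : E → E}
    (hF : ∀ x y, m * ‖x - y‖ ^ 2 ≤ ⟪F x - F y, x - y⟫) {x y : E} (hx : F x = 0)
    (hy : G y = 0) : ‖x - y‖ ≤ ‖F y - G y‖ / m := by
  have h := mul_norm_le_norm_of_mul_sq_le_inner ((hF x y).trans_eq (real_inner_comm _ _))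
  rw [hx, zero_sub, norm_neg] at h
  rwa [hy, sub_zero, le_div_iff₀' hm]

end StrongMonotonicity

theorem stmt_19_general (n : ℕ)
    (G : Eucl n → ℝ → Eucl n)                        -- ∇ₓ f
    (Hess : Eucl n ≃L[ℝ] Eucl n)                     -- ∇²ₓₓ f(x_k; t_k), invertible
    (c : Eucl n → ℝ → Eucl n)                        -- ∇ₜₓ f
    (xstar : ℝ → Eucl n) (xk : Eucl n) (m L C₀ tk h γ : ℝ)
    (hm : 0 < m) (hmL : m ≤ L) (hC₀ : 0 ≤ C₀) (hh : 0 < h)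
    (hγ0 : 0 ≤ γ)
    -- Assumption 1: m I ⪯ ∇²ₓₓ f ⪯ L I, ‖∇ₜₓ f‖ ≤ C₀
    (hstrong : ∀ t x y, m * ‖x - y‖ ^ 2 ≤ (inner ℝ (G x t - G y t) (x - y) : ℝ))
    (hHlow : ∀ v, m * ‖v‖ ^ 2 ≤ (inner ℝ v (Hess v) : ℝ))
    (hlip : ∀ t x y, ‖G x t - G y t‖ ≤ L * ‖x - y‖)
    (hcbound : ∀ x t, ‖c x t‖ ≤ C₀)
    (htime : ∀ x t s, ‖G x t - G x s‖ ≤ C₀ * |t - s|)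
    -- x*(t) is the unique unconstrained minimizer of f(·;t): ∇ₓf(x*(t);t) = 0
    (hG0 : ∀ t, G (xstar t) t = 0) :
    ‖(xk - Hess.symm (h • c xk tk + γ • G xk tk)) - xstar (tk + h)‖ ≤
      (1 - γ + γ * (2 * L / m)) * ‖xk - xstar tk‖ +
        2 * (2 * h * (C₀ / m) * (1 + L / m)) := by
  have hdrift : ‖xstar tk - xstar (tk + h)‖ ≤ C₀ * h / m := by
    refine (norm_sub_le_div_of_strongly_monotone (G := fun y => G y (tk + h)) hm (hstrong tk)
      (hG0 tk) (hG0 (tk + h))).trans ?_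
    gcongr
    simpa [abs_of_pos hh] using htime (xstar (tk + h)) tk (tk + h)
  have hnewton : ‖Hess.symm (G xk tk)‖ ≤ L / m * ‖xk - xstar tk‖ := by
    refine (Hess.norm_symm_apply_le_of_coercive hm hHlow _).trans ?_
    rw [div_mul_eq_mul_div]
    gcongr
    simpa [hG0] using hlip tk xk (xstar tk)
  have htangent : ‖Hess.symm (c xk tk)‖ ≤ C₀ / m :=
    (Hess.norm_symm_apply_le_of_coercive hm hHlow _).trans (by gcongr; exact hcbound xk tk)
  have hsplit : (xk - Hess.symm (h • c xk tk + γ • G xk tk)) - xstar (tk + h) =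
      ((xk - xstar tk) - γ • Hess.symm (G xk tk)) - h • Hess.symm (c xk tk) +
        (xstar tk - xstar (tk + h)) := by
    rw [map_add, map_smul, map_smul]
    module
  have hLm : 1 ≤ L / m := (one_le_div hm).mpr hmL
  calc _ ≤ (‖xk - xstar tk‖ + γ * ‖Hess.symm (G xk tk)‖) + h * ‖Hess.symm (c xk tk)‖ +
        ‖xstar tk - xstar (tk + h)‖ := by
        rw [hsplit]
        refine (norm_add_le _ _).trans (add_le_add_left ((norm_sub_le _ _).trans ?_) _)
        rw [norm_smul, Real.norm_of_nonneg hh.le]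
        gcongr
        refine (norm_sub_le _ _).trans_eq ?_
        rw [norm_smul, Real.norm_of_nonneg hγ0]
    _ ≤ (‖xk - xstar tk‖ + γ * (L / m * ‖xk - xstar tk‖)) + h * (C₀ / m) + C₀ * h / m := by
        gcongr
    _ ≤ _ := by
        have hd := norm_nonneg (xk - xstar tk)
        have hCm : 0 ≤ h * (C₀ / m) := by positivity
        rw [show C₀ * h / m = h * (C₀ / m) by ring, mul_div_assoc]
        nlinarith [mul_nonneg (mul_nonneg hγ0 hd) (sub_nonneg.mpr hLm)]

/-- Error bound for the γ-damped Newton-like prediction step in the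
unconstrained case, under Assumption 1 (Proposition 4, Case a). -/
theorem stmt_19 (n : ℕ) (f : Eucl n → ℝ → ℝ)
    (G : Eucl n → ℝ → Eucl n)                        -- ∇ₓ f
    (Hess : Eucl n ≃L[ℝ] Eucl n)                     -- ∇²ₓₓ f(x_k; t_k), invertible
    (c : Eucl n → ℝ → Eucl n)                        -- ∇ₜₓ f
    (xstar : ℝ → Eucl n) (xk : Eucl n) (m L C₀ tk h γ : ℝ)
    (hm : 0 < m) (hmL : m ≤ L) (hC₀ : 0 ≤ C₀) (hh : 0 < h)
    (hγ0 : 0 ≤ γ) (hγ1 : γ ≤ 1)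
    (hgrad : ∀ x t, HasGradientAt (fun y => f y t) (G x t) x)
    -- Hess is the Hessian of f(·; t_k) at x_k
    (hHess : HasFDerivAt (fun y => G y tk) (Hess : Eucl n →L[ℝ] Eucl n) xk)
    (hct : ∀ x t, HasDerivAt (fun s => G x s) (c x t) t)
    -- Assumption 1: m I ⪯ ∇²ₓₓ f ⪯ L I, ‖∇ₜₓ f‖ ≤ C₀
    (hstrong : ∀ t x y, m * ‖x - y‖ ^ 2 ≤ (inner ℝ (G x t - G y t) (x - y) : ℝ))
    (hHlow : ∀ v, m * ‖v‖ ^ 2 ≤ (inner ℝ v (Hess v) : ℝ))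
    (hHhigh : ∀ v, ‖Hess v‖ ≤ L * ‖v‖)
    (hlip : ∀ t x y, ‖G x t - G y t‖ ≤ L * ‖x - y‖)
    (hcbound : ∀ x t, ‖c x t‖ ≤ C₀)
    (htime : ∀ x t s, ‖G x t - G x s‖ ≤ C₀ * |t - s|)
    -- x*(t) is the unique unconstrained minimizer of f(·;t): ∇ₓf(x*(t);t) = 0
    (hmin : ∀ t, IsMinOn (fun x => f x t) Set.univ (xstar t))
    (hG0 : ∀ t, G (xstar t) t = 0) :
    ‖(xk - Hess.symm (h • c xk tk + γ • G xk tk)) - xstar (tk + h)‖ ≤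
      (1 - γ + γ * (2 * L / m)) * ‖xk - xstar tk‖ +
        2 * (2 * h * (C₀ / m) * (1 + L / m)) :=
  stmt_19_general n G Hess c xstar xk m L C₀ tk h γ hm hmL hC₀ hh hγ0 hstrong hHlow hlip hcbound
    htime hG0
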